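/- arXiv:2104.06526 — 2 statements merged into one kernel-verified Lean document; each statement's English description precedes it below -/
import Mathlib

section
/- Let I = (I_1,…,I_k,a) be a decorated nested chain. Then the right coset C_I = H_I·A equals the set of all matrices A' ∈ S(r,n) satisfying conditions (i) and (ii) (namely: (i) for each j ∈ {1,…,k}, I_j = {b : A'_{ab} ≠ 0 for some row index a > n−|I_j|}, and (ii) for each i ∈ I_k the unique nonzero entry in column i of A' equals ζ^{−a(i)}). In particular, C_I does not depend on the choice of the representative A. -/
open Finset

noncomputable section

/-- A decorated nested chain `∅ ⊊ I_1 ⊊ ⋯ ⊊ I_k ⊆ [n]` (here `I j` for `j : Fin len`,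
strictly increasing and all nonempty), with decoration `dec : I_k → ℤ/r` (the top set
`I_k` is `Finset.univ.sup I`). -/
structure DecChain (r n : ℕ) where
  len : ℕ
  I : Fin len → Finset (Fin n)
  nonempty : ∀ j, (I j).Nonempty
  mono : ∀ j j' : Fin len, j < j' → I j ⊂ I j'
  dec : ∀ i : Fin n, i ∈ Finset.univ.sup I → ZMod r

/-- The top set `I_k` of a chain (`∅` when `k = 0`). -/
def DecChain.top {r n : ℕ} (c : DecChain r n) : Finset (Fin n) :=
  Finset.univ.sup c.I

theorem DecChain.mem_top {r n : ℕ} (c : DecChain r n) (j : Fin c.len) {i : Fin n}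
    (h : i ∈ c.I j) : i ∈ c.top :=
  Finset.mem_of_subset (Finset.le_sup (Finset.mem_univ j)) h

/-- `S(r,n)`: `n×n` complex matrices with exactly one nonzero entry in each row and in
each column, every nonzero entry being an `r`-th root of unity. -/
def Srn (r n : ℕ) : Set (Matrix (Fin n) (Fin n) ℂ) :=
  {A | (∀ a : Fin n, ∃! b : Fin n, A a b ≠ 0) ∧
       (∀ b : Fin n, ∃! a : Fin n, A a b ≠ 0) ∧
       (∀ a b : Fin n, A a b ≠ 0 → A a b ^ r = 1)}

/-- The generator `s_i` (rows/columns `0,…,n-1` here correspond to `1,…,n` in the paper):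
`s_0 = diag(ζ,1,…,1)`, and for `1 ≤ i ≤ n-1`, `s_i` is the permutation matrix of the
adjacent transposition exchanging (0-based) positions `i-1` and `i`. -/
def sgen {n : ℕ} (ζ : ℂ) (i : ℕ) : Matrix (Fin n) (Fin n) ℂ :=
  if i = 0 then Matrix.diagonal (fun a : Fin n => if (a : ℕ) = 0 then ζ else 1)
  else Matrix.of fun a b : Fin n =>
    if Equiv.swap (i - 1) i (a : ℕ) = (b : ℕ) then (1 : ℂ) else 0

/-- The generating set `T = {s_0, s_1, …, s_{n-1}}`. -/
def Tset {n : ℕ} (ζ : ℂ) : Set (Matrix (Fin n) (Fin n) ℂ) :=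
  {M | ∃ i : Fin n, M = sgen ζ (i : ℕ)}

/-- The subgroup (as a set) generated by a set `S` of matrices: all finite products of
elements of `S` and their inverses. -/
def genBy {n : ℕ} (S : Set (Matrix (Fin n) (Fin n) ℂ)) :
    Set (Matrix (Fin n) (Fin n) ℂ) :=
  {A | ∃ l : List (Matrix (Fin n) (Fin n) ℂ),
    (∀ B ∈ l, ∃ x ∈ S, B = x ∨ B = x⁻¹) ∧ l.prod = A}
/-- The generating set `{s_i : n - i ∉ {|I_1|,…,|I_k|}}` of the subgroup `H_I`. -/
def HIgens {r n : ℕ} (ζ : ℂ) (c : DecChain r n) :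
    Set (Matrix (Fin n) (Fin n) ℂ) :=
  {M | ∃ i : Fin n, (∀ j : Fin c.len, n - (i : ℕ) ≠ (c.I j).card) ∧ M = sgen ζ (i : ℕ)}

/-- Conditions (i) and (ii) on a representative `A` of the coset `C_I`:
(i) for each `j`, `I_j` is the set of columns in which the last `|I_j|` rows of `A` have
their nonzero entries (0-based: rows `a` with `n - |I_j| ≤ a`);
(ii) for each `i ∈ I_k`, the unique nonzero entry in column `i` equals `ζ^{-a(i)}`. -/
def repCond {r n : ℕ} (ζ : ℂ) (c : DecChain r n) (A : Matrix (Fin n) (Fin n) ℂ) : Prop :=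
  (∀ j : Fin c.len,
    (c.I j : Set (Fin n)) =
      {b : Fin n | ∃ a : Fin n, n - (c.I j).card ≤ (a : ℕ) ∧ A a b ≠ 0}) ∧
  (∀ (i : Fin n) (h : i ∈ c.top) (a : Fin n), A a i ≠ 0 →
    A a i = ζ ^ (-(((c.dec i h).val : ℤ))))

/-- The `T`-coset `C_I` of a decorated nested chain, described as the set of matrices
of `S(r,n)` satisfying conditions (i) and (ii). -/
def CIset {r n : ℕ} (ζ : ℂ) (c : DecChain r n) : Set (Matrix (Fin n) (Fin n) ℂ) :=
  {A | A ∈ Srn r n ∧ repCond ζ c A}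

namespace Stmt12Aux

variable {r n : ℕ}

/-- Monomial matrix with permutation `τ` (row `a` has its entry in column `τ a`) and
entries `g`. -/
def Mmat (τ : Equiv.Perm (Fin n)) (g : Fin n → ℂ) : Matrix (Fin n) (Fin n) ℂ :=
  Matrix.of fun a b => if τ a = b then g a else 0

lemma Mmat_apply (τ : Equiv.Perm (Fin n)) (g : Fin n → ℂ) (a b : Fin n) :
    Mmat τ g a b = if τ a = b then g a else 0 := rfl

lemma Mmat_mul (τ₁ τ₂ : Equiv.Perm (Fin n)) (g₁ g₂ : Fin n → ℂ) :
    Mmat τ₁ g₁ * Mmat τ₂ g₂ = Mmat (τ₁.trans τ₂) (fun a => g₁ a * g₂ (τ₁ a)) := by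
  ext a b
  simp only [Matrix.mul_apply, Mmat, Matrix.of_apply, Equiv.trans_apply, ite_mul, zero_mul]
  rw [Finset.sum_eq_single (τ₁ a)]
  · simp [mul_ite]; congr
  · intro c _ hc
    rw [if_neg (fun h => hc h.symm)]
  · simp

lemma Mmat_one : Mmat (1 : Equiv.Perm (Fin n)) (fun _ => (1 : ℂ)) = 1 := by
  ext a b
  simp [Mmat, Matrix.one_apply]; congr

lemma Mmat_inv (τ : Equiv.Perm (Fin n)) {g : Fin n → ℂ} (h0 : ∀ a, g a ≠ 0) :
    (Mmat τ g)⁻¹ = Mmat τ.symm (fun a => (g (τ.symm a))⁻¹) := by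
  apply Matrix.inv_eq_right_inv
  rw [Mmat_mul]
  have h1 : τ.trans τ.symm = 1 := Equiv.self_trans_symm τ
  rw [h1, show (fun a => g a * (g (τ.symm (τ a)))⁻¹) = fun _ : Fin n => (1:ℂ) from
    funext fun a => by simp [mul_inv_cancel₀ (h0 a)]]
  exact Mmat_one

lemma Mmat_ne_zero_iff {τ : Equiv.Perm (Fin n)} {g : Fin n → ℂ} (h0 : ∀ a, g a ≠ 0)
    {a b : Fin n} : Mmat τ g a b ≠ 0 ↔ τ a = b := by
  rw [Mmat_apply]
  split <;> simp_all [h0 a]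

lemma Mmat_mem_Srn (τ : Equiv.Perm (Fin n)) {g : Fin n → ℂ} (h0 : ∀ a, g a ≠ 0)
    (hr1 : ∀ a, g a ^ r = 1) : Mmat τ g ∈ Srn r n := by
  refine ⟨fun a => ⟨τ a, ?_, fun b hb => ?_⟩, fun b => ⟨τ.symm b, ?_, fun a ha => ?_⟩, ?_⟩
  · simp [Mmat_ne_zero_iff h0]
  · exact ((Mmat_ne_zero_iff h0).mp hb).symm
  · simp [Mmat_ne_zero_iff h0]
  · have := (Mmat_ne_zero_iff h0).mp ha
    exact ((Equiv.symm_apply_eq τ).mpr this.symm).symm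
  · intro a b hab
    have h := (Mmat_ne_zero_iff h0).mp hab
    rw [Mmat_apply, if_pos h]
    exact hr1 a

lemma exists_Mmat {M : Matrix (Fin n) (Fin n) ℂ} (hM : M ∈ Srn r n) :
    ∃ (τ : Equiv.Perm (Fin n)) (g : Fin n → ℂ),
      (∀ a, g a ≠ 0) ∧ (∀ a, g a ^ r = 1) ∧ M = Mmat τ g := by
  obtain ⟨hrow, hcol, hpow⟩ := hM
  have hu : ∀ a, ∃ b, M a b ≠ 0 := fun a => ⟨(hrow a).choose, (hrow a).choose_spec.1⟩
  set u : Fin n → Fin n := fun a => (hrow a).choose with hu_def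
  have hu1 : ∀ a, M a (u a) ≠ 0 := fun a => (hrow a).choose_spec.1
  have hu2 : ∀ a b, M a b ≠ 0 → b = u a := fun a b h => ((hrow a).choose_spec.2 b h)
  have hinj : Function.Injective u := by
    intro a a' h
    exact ((hcol (u a)).choose_spec.2 a (hu1 a)).trans
      (((hcol (u a)).choose_spec.2 a' (by rw [h]; exact hu1 a'))).symm
  have hbij : Function.Bijective u := (Finite.injective_iff_bijective).mp hinj
  refine ⟨Equiv.ofBijective u hbij, fun a => M a (u a), hu1, fun a => hpow _ _ (hu1 a), ?_⟩
  ext a b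
  rw [Mmat_apply]
  by_cases h : u a = b
  · subst h; simp [Equiv.ofBijective]
  · rw [if_neg (by simpa [Equiv.ofBijective] using h)]
    by_contra hz
    exact h ((hu2 a b hz).symm)

/-! ### Facts about chains and `genBy` -/

lemma genBy_one {S : Set (Matrix (Fin n) (Fin n) ℂ)} : (1 : Matrix (Fin n) (Fin n) ℂ) ∈ genBy S :=
  ⟨[], by simp, by simp⟩

lemma genBy_mul {S : Set (Matrix (Fin n) (Fin n) ℂ)} {A B : Matrix (Fin n) (Fin n) ℂ}
    (hA : A ∈ genBy S) (hB : B ∈ genBy S) : A * B ∈ genBy S := by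
  obtain ⟨l₁, h₁, rfl⟩ := hA
  obtain ⟨l₂, h₂, rfl⟩ := hB
  exact ⟨l₁ ++ l₂, by
    intro x hx
    rcases List.mem_append.mp hx with h | h
    exacts [h₁ x h, h₂ x h], by rw [List.prod_append]⟩

lemma genBy_of_mem {S : Set (Matrix (Fin n) (Fin n) ℂ)} {x : Matrix (Fin n) (Fin n) ℂ}
    (h : x ∈ S) : x ∈ genBy S :=
  ⟨[x], by simpa using ⟨x, h, Or.inl rfl⟩, by simp⟩

lemma card_I_le (c : DecChain r n) (j : Fin c.len) : (c.I j).card ≤ n := by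
  simpa using Finset.card_le_univ (c.I j)

lemma card_I_pos (c : DecChain r n) (j : Fin c.len) : 0 < (c.I j).card :=
  Finset.card_pos.mpr (c.nonempty j)

lemma card_I_le_top (c : DecChain r n) (j : Fin c.len) : (c.I j).card ≤ c.top.card :=
  Finset.card_le_card (Finset.le_iff_subset.mp (Finset.le_sup (Finset.mem_univ j)))

lemma card_top_le (c : DecChain r n) : c.top.card ≤ n := by
  simpa using Finset.card_le_univ c.top

lemma top_eq (c : DecChain r n) (h : 0 < c.len) :
    c.top = c.I ⟨c.len - 1, by omega⟩ := by
  apply le_antisymm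
  · refine Finset.sup_le fun j _ => ?_
    have hj : j ≤ (⟨c.len - 1, by omega⟩ : Fin c.len) := by
      rw [Fin.le_def]
      have := j.isLt
      simp only []
      omega
    rcases lt_or_eq_of_le hj with hlt | heq
    · exact (c.mono _ _ hlt).subset
    · rw [heq]
  · exact Finset.le_sup (Finset.mem_univ _)

lemma top_empty (c : DecChain r n) (h : c.len = 0) : c.top = ∅ := by
  unfold DecChain.top
  have : (Finset.univ : Finset (Fin c.len)) = ∅ := by
    rw [h]; exact Finset.univ_eq_empty
  rw [this, Finset.sup_empty]
  rfl

/-- Condition (i) in permutation form: rows past the threshold map exactly onto `I j`. -/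
lemma cond1_top {c : DecChain r n} {σ : Equiv.Perm (Fin n)}
    (h1 : ∀ (j : Fin c.len) (a : Fin n), n - (c.I j).card ≤ (a : ℕ) ↔ σ a ∈ c.I j)
    (a : Fin n) : n - c.top.card ≤ (a : ℕ) ↔ σ a ∈ c.top := by
  rcases Nat.eq_zero_or_pos c.len with h | h
  · rw [top_empty c h]
    simp only [Finset.notMem_empty, iff_false, not_le, Finset.card_empty, Nat.sub_zero]
    exact a.isLt
  · rw [top_eq c h]
    exact h1 _ a

/-- `τ` preserves all tail thresholds. -/
def tOK (c : DecChain r n) (τ : Equiv.Perm (Fin n)) : Prop :=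
  ∀ (j : Fin c.len) (a : Fin n),
    n - (c.I j).card ≤ ((τ a : Fin n) : ℕ) ↔ n - (c.I j).card ≤ (a : ℕ)

lemma tOK_top {c : DecChain r n} {τ : Equiv.Perm (Fin n)} (ht : tOK c τ) (a : Fin n) :
    n - c.top.card ≤ ((τ a : Fin n) : ℕ) ↔ n - c.top.card ≤ (a : ℕ) := by
  rcases Nat.eq_zero_or_pos c.len with h | h
  · rw [top_empty c h]
    simp only [Finset.card_empty, Nat.sub_zero]
    exact iff_of_false (by exact absurd (τ a).isLt ∘ Nat.not_lt_of_le)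
      (by exact absurd a.isLt ∘ Nat.not_lt_of_le)
  · rw [top_eq c h]
    exact ht _ a

lemma tOK_one (c : DecChain r n) : tOK c 1 := fun _ _ => Iff.rfl

lemma tOK_symm {c : DecChain r n} {τ : Equiv.Perm (Fin n)} (ht : tOK c τ) : tOK c τ.symm := by
  intro j a
  conv_rhs => rw [← τ.apply_symm_apply a]
  exact (ht j (τ.symm a)).symm

/-! ### `repCond` for monomial matrices -/

lemma repCond_iff {ζ : ℂ} {c : DecChain r n} {σ : Equiv.Perm (Fin n)} {f : Fin n → ℂ}
    (h0 : ∀ a, f a ≠ 0) :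
    repCond ζ c (Mmat σ f) ↔
      ((∀ (j : Fin c.len) (a : Fin n), n - (c.I j).card ≤ (a : ℕ) ↔ σ a ∈ c.I j) ∧
       (∀ (i : Fin n) (h : i ∈ c.top) (a : Fin n), σ a = i →
          f a = ζ ^ (-(((c.dec i h).val : ℤ))))) := by
  constructor
  · rintro ⟨h1, h2⟩
    refine ⟨fun j a => ?_, fun i h a hσ => ?_⟩
    · constructor
      · intro hta
        have hmem : σ a ∈ {b : Fin n | ∃ a' : Fin n,
            n - (c.I j).card ≤ (a' : ℕ) ∧ Mmat σ f a' b ≠ 0} :=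
          ⟨a, hta, by simp [Mmat_ne_zero_iff h0]⟩
        rw [← h1 j] at hmem
        exact hmem
      · intro hmem
        have hmem' : σ a ∈ {b : Fin n | ∃ a' : Fin n,
            n - (c.I j).card ≤ (a' : ℕ) ∧ Mmat σ f a' b ≠ 0} := by
          rw [← h1 j]; exact hmem
        obtain ⟨a', hta', hne⟩ := hmem'
        have : σ a' = σ a := (Mmat_ne_zero_iff h0).mp hne
        have : a' = a := σ.injective this
        omega
    · have hne : Mmat σ f a i ≠ 0 := by simp [Mmat_ne_zero_iff h0, hσ]
      have := h2 i h a hne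
      rwa [Mmat_apply, if_pos hσ] at this
  · rintro ⟨h1, h2⟩
    constructor
    · intro j
      ext b
      simp only [Finset.coe_sort_coe, Set.mem_setOf_eq, Finset.mem_coe]
      constructor
      · intro hb
        refine ⟨σ.symm b, ?_, by simp [Mmat_ne_zero_iff h0]⟩
        exact (h1 j (σ.symm b)).mpr (by simpa using hb)
      · rintro ⟨a, hta, hne⟩
        have hσ : σ a = b := (Mmat_ne_zero_iff h0).mp hne
        rw [← hσ]
        exact (h1 j a).mp hta
    · intro i h a hne
      have hσ : σ a = i := (Mmat_ne_zero_iff h0).mp hne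
      rw [Mmat_apply, if_pos hσ]
      exact h2 i h a hσ

/-! ### `sgen` as a monomial matrix -/

lemma swap_val {i j x : Fin n} (hij : i ≠ j) :
    ((Equiv.swap i j x : Fin n) : ℕ) =
      if x = i then (j : ℕ) else if x = j then (i : ℕ) else (x : ℕ) := by
  rcases eq_or_ne x i with rfl | hxi
  · simp [Equiv.swap_apply_left]
  · rcases eq_or_ne x j with rfl | hxj
    · simp [Equiv.swap_apply_right, hxi]
    · simp [Equiv.swap_apply_of_ne_of_ne hxi hxj, hxi, hxj]

lemma sgen_zero (ζ : ℂ) :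
    (sgen ζ 0 : Matrix (Fin n) (Fin n) ℂ) =
      Mmat (1 : Equiv.Perm (Fin n)) (fun a => if (a : ℕ) = 0 then ζ else 1) := by
  ext a b
  rw [sgen, if_pos rfl]
  by_cases h : a = b
  · subst h; simp [Matrix.diagonal, Mmat_apply]
  · rw [Matrix.diagonal_apply_ne _ h, Mmat_apply, if_neg (by simpa using h)]

lemma sgen_eq_swap (ζ : ℂ) {i j : Fin n} (hij : (i : ℕ) + 1 = (j : ℕ)) :
    (sgen ζ (j : ℕ) : Matrix (Fin n) (Fin n) ℂ) =
      Mmat (Equiv.swap i j) (fun _ => (1 : ℂ)) := by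
  have hne : i ≠ j := fun h => by rw [h] at hij; omega
  have hj0 : (j : ℕ) ≠ 0 := by omega
  ext a b
  rw [sgen, if_neg hj0, Mmat_apply]
  have hsub : (j : ℕ) - 1 = (i : ℕ) := by omega
  rw [hsub]
  have hval : Equiv.swap (i : ℕ) (j : ℕ) (a : ℕ) = ((Equiv.swap i j a : Fin n) : ℕ) := by
    rw [swap_val hne, Equiv.swap_apply_def]
    simp only [Fin.val_eq_val]
  rw [Matrix.of_apply, hval]
  by_cases h : Equiv.swap i j a = b
  · rw [if_pos (by rw [h]), if_pos h]
  · rw [if_neg (by simpa [Fin.val_eq_val] using h), if_neg h]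

/-- Threshold preservation for an adjacent swap away from the threshold. -/
lemma tle_swap {i j x : Fin n} (hij : (i : ℕ) + 1 = (j : ℕ)) {t : ℕ} (htj : t ≠ (j : ℕ)) :
    (t ≤ ((Equiv.swap i j x : Fin n) : ℕ)) ↔ t ≤ (x : ℕ) := by
  have hne : i ≠ j := fun h => by rw [h] at hij; omega
  rw [swap_val hne]
  rcases eq_or_ne x i with rfl | hxi
  · rw [if_pos rfl]; omega
  · rcases eq_or_ne x j with rfl | hxj
    · rw [if_neg hxi, if_pos rfl]; omega
    · rw [if_neg hxi, if_neg hxj]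

/-! ### Descents and inversions -/

lemma exists_descent {τ : Equiv.Perm (Fin n)} (hτ : τ ≠ 1) :
    ∃ i j : Fin n, (i : ℕ) + 1 = (j : ℕ) ∧ τ j < τ i := by
  by_contra hcon
  push_neg at hcon
  have hadj : ∀ i j : Fin n, (i : ℕ) + 1 = (j : ℕ) → τ i < τ j := by
    intro i j h
    rcases lt_or_eq_of_le (hcon i j h) with h' | h'
    · exact h'
    · exact absurd (τ.injective h') (by intro e; rw [e] at h; omega)
  have key : ∀ k : ℕ, ∀ a b : Fin n, (b : ℕ) = (a : ℕ) + k + 1 → τ a < τ b := by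
    intro k
    induction k with
    | zero => intro a b h; exact hadj a b (by omega)
    | succ k ih =>
      intro a b h
      have hm : (a : ℕ) + k + 1 < n := by have := b.isLt; omega
      exact (ih a ⟨(a : ℕ) + k + 1, hm⟩ rfl).trans
        (hadj _ b (show ((a : ℕ) + k + 1) + 1 = (b : ℕ) by omega))
  have hmono : StrictMono τ := fun a b hab =>
    key ((b : ℕ) - (a : ℕ) - 1) a b (by have := Fin.lt_def.mp hab; omega)
  have le_apply : ∀ (f : Fin n → Fin n), StrictMono f → ∀ a : Fin n, (a : ℕ) ≤ (f a : ℕ) := by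
    intro f hf
    have : ∀ k : ℕ, ∀ a : Fin n, (a : ℕ) = k → k ≤ (f a : ℕ) := by
      intro k
      induction k with
      | zero => intro a _; exact Nat.zero_le _
      | succ k ih =>
        intro a ha
        have hk : k < n := by have := a.isLt; omega
        have h1 : f ⟨k, hk⟩ < f a := hf (by rw [Fin.lt_def]; show k < (a : ℕ); omega)
        have h2 := ih ⟨k, hk⟩ rfl
        have h3 := Fin.lt_def.mp h1
        omega
    exact fun a => this _ a rfl
  have hmono2 : StrictMono (fun x => τ.symm x) := by
    intro a b hab
    rcases lt_trichotomy (τ.symm a) (τ.symm b) with h | h | h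
    · exact h
    · exact absurd (by rw [← τ.apply_symm_apply a, ← τ.apply_symm_apply b, h]) hab.ne
    · have hba : b < a := by
        have := hmono h
        rwa [τ.apply_symm_apply, τ.apply_symm_apply] at this
      exact absurd hab (not_lt.mpr hba.le)
  refine hτ (Equiv.ext fun a => ?_)
  have h1 := le_apply τ hmono a
  have h2 := le_apply _ hmono2 (τ a)
  simp only [Equiv.symm_apply_apply] at h2
  exact Fin.ext (le_antisymm h2 h1)

def invCount (τ : Equiv.Perm (Fin n)) : ℕ :=
  (Finset.univ.filter fun p : Fin n × Fin n => p.1 < p.2 ∧ τ p.2 < τ p.1).card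

lemma invCount_lt {τ : Equiv.Perm (Fin n)} {i j : Fin n} (hij : (i : ℕ) + 1 = (j : ℕ))
    (hd : τ j < τ i) : invCount ((Equiv.swap i j).trans τ) < invCount τ := by
  classical
  have hne : i ≠ j := fun h => by rw [h] at hij; omega
  set s := Equiv.swap i j with hs
  have hsi : s i = j := Equiv.swap_apply_left i j
  have hsj : s j = i := Equiv.swap_apply_right i j
  set e : Fin n × Fin n → Fin n × Fin n := fun p => (s p.1, s p.2) with he
  have hinv : ∀ p, e (e p) = p := by
    intro p
    simp only [he, hs, Equiv.swap_apply_self]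
  have himg : ∀ (S : Finset (Fin n × Fin n)) (p), p ∈ Finset.image e S ↔ e p ∈ S := by
    intro S p
    constructor
    · intro h
      obtain ⟨q, hq, hqe⟩ := Finset.mem_image.mp h
      rw [← hqe, hinv]; exact hq
    · intro h
      exact Finset.mem_image.mpr ⟨e p, h, hinv p⟩
  have hcomp : ∀ a b : Fin n, a ≠ b → ¬(a = i ∧ b = j) → ¬(a = j ∧ b = i) →
      (a < b ↔ s a < s b) := by
    intro a b hab h1 h2
    rw [Fin.lt_def, Fin.lt_def, hs, swap_val hne, swap_val hne]
    by_cases hai : a = i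
    · by_cases hbj : b = j
      · exact absurd ⟨hai, hbj⟩ h1
      · have hbi : ¬ b = i := fun h => hab (hai.trans h.symm)
        rw [if_pos hai, if_neg hbi, if_neg hbj]
        have v1 := Fin.ext_iff.mp hai
        have v2 : (b : ℕ) ≠ (i : ℕ) := fun h => hbi (Fin.ext h)
        have v3 : (b : ℕ) ≠ (j : ℕ) := fun h => hbj (Fin.ext h)
        omega
    · by_cases haj : a = j
      · by_cases hbi : b = i
        · exact absurd ⟨haj, hbi⟩ h2
        · have hbj : ¬ b = j := fun h => hab (haj.trans h.symm)
          rw [if_neg hai, if_pos haj, if_neg hbi, if_neg hbj]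
          have v1 := Fin.ext_iff.mp haj
          have v2 : (b : ℕ) ≠ (i : ℕ) := fun h => hbi (Fin.ext h)
          have v3 : (b : ℕ) ≠ (j : ℕ) := fun h => hbj (Fin.ext h)
          omega
      · by_cases hbi : b = i
        · rw [if_neg hai, if_neg haj, if_pos hbi]
          have v1 := Fin.ext_iff.mp hbi
          have v2 : (a : ℕ) ≠ (i : ℕ) := fun h => hai (Fin.ext h)
          have v3 : (a : ℕ) ≠ (j : ℕ) := fun h => haj (Fin.ext h)
          omega
        · by_cases hbj : b = j
          · rw [if_neg hai, if_neg haj, if_neg hbi, if_pos hbj]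
            have v1 := Fin.ext_iff.mp hbj
            have v2 : (a : ℕ) ≠ (i : ℕ) := fun h => hai (Fin.ext h)
            have v3 : (a : ℕ) ≠ (j : ℕ) := fun h => haj (Fin.ext h)
            omega
          · rw [if_neg hai, if_neg haj, if_neg hbi, if_neg hbj]
  have hijlt : i < j := by rw [Fin.lt_def]; omega
  have hmemij : (i, j) ∈ Finset.univ.filter
      fun p : Fin n × Fin n => p.1 < p.2 ∧ τ p.2 < τ p.1 :=
    Finset.mem_filter.mpr ⟨Finset.mem_univ _, hijlt, hd⟩
  have hset : (Finset.univ.filter fun p : Fin n × Fin n =>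
      p.1 < p.2 ∧ (s.trans τ) p.2 < (s.trans τ) p.1) =
      Finset.image e ((Finset.univ.filter fun p : Fin n × Fin n =>
        p.1 < p.2 ∧ τ p.2 < τ p.1).erase (i, j)) := by
    ext p
    obtain ⟨a, b⟩ := p
    rw [himg]
    simp only [Finset.mem_filter, Finset.mem_univ, true_and, Finset.mem_erase, he]
    simp only [Equiv.trans_apply]
    by_cases hQ : τ (s b) < τ (s a)
    · simp only [hQ, and_true]
      constructor
      · intro hab
        have hab' : a ≠ b := hab.ne
        have h1 : ¬(a = i ∧ b = j) := by
          rintro ⟨rfl, rfl⟩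
          rw [hsi, hsj] at hQ
          exact absurd hd (asymm hQ)
        have h2 : ¬(a = j ∧ b = i) := by
          rintro ⟨rfl, rfl⟩
          rw [Fin.lt_def] at hab
          omega
        refine ⟨?_, (hcomp a b hab' h1 h2).mp hab⟩
        intro hp
        rw [Prod.mk.injEq] at hp
        have ha : a = j := s.injective (by rw [hp.1, hsj])
        have hb : b = i := s.injective (by rw [hp.2, hsi])
        exact h2 ⟨ha, hb⟩
      · rintro ⟨hpair, hsab⟩
        have hab' : a ≠ b := fun h => by rw [h] at hsab; exact lt_irrefl _ hsab
        have h1 : ¬(a = i ∧ b = j) := by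
          rintro ⟨rfl, rfl⟩
          rw [hsi, hsj, Fin.lt_def] at hsab
          omega
        have h2 : ¬(a = j ∧ b = i) := by
          rintro ⟨rfl, rfl⟩
          exact hpair (by rw [hsj, hsi])
        exact (hcomp a b hab' h1 h2).mpr hsab
    · simp [hQ]
  rw [invCount, invCount, hset,
    Finset.card_image_of_injective _ (fun p q h => by rw [← hinv p, h, hinv q]),
    Finset.card_erase_of_mem hmemij]
  have hpos : 0 < (Finset.univ.filter fun p : Fin n × Fin n =>
      p.1 < p.2 ∧ τ p.2 < τ p.1).card := Finset.card_pos.mpr ⟨(i, j), hmemij⟩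
  omega

lemma t_ne_of_constraint {c : DecChain r n} {jv : ℕ} (hjv : jv < n)
    (hcon : ∀ j' : Fin c.len, n - jv ≠ (c.I j').card) (j' : Fin c.len) :
    n - (c.I j').card ≠ jv := by
  intro h
  have h1 := card_I_pos c j'
  have h2 := card_I_le c j'
  exact hcon j' (by omega)

/-- Tail-preserving permutation matrices lie in the subgroup generated by `HIgens`. -/
lemma perm_mem (ζ : ℂ) (c : DecChain r n) {τ : Equiv.Perm (Fin n)} (ht : tOK c τ) :
    Mmat τ (fun _ => (1 : ℂ)) ∈ genBy (HIgens ζ c) := by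
  suffices H : ∀ (N : ℕ) (τ : Equiv.Perm (Fin n)), invCount τ = N → tOK c τ →
      Mmat τ (fun _ => (1 : ℂ)) ∈ genBy (HIgens ζ c) from H _ τ rfl ht
  intro N
  induction N using Nat.strong_induction_on with
  | _ N IH =>
    intro τ hN ht
    by_cases hτ : τ = 1
    · subst hτ; rw [Mmat_one]; exact genBy_one
    · obtain ⟨i, j, hij, hd⟩ := exists_descent hτ
      set s := Equiv.swap i j with hs
      have hcon : ∀ j' : Fin c.len, n - (j : ℕ) ≠ (c.I j').card := by
        intro j' hcard
        have h1 := card_I_pos c j'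
        have h2 := card_I_le c j'
        have hjlt := j.isLt
        have hteq : n - (c.I j').card = (j : ℕ) := by omega
        have hA := ht j' i
        have hB := ht j' j
        rw [hteq] at hA hB
        have hi : ¬ ((j : ℕ) ≤ (i : ℕ)) := by omega
        have hτi : ¬ ((j : ℕ) ≤ ((τ i : Fin n) : ℕ)) := fun hle => hi (hA.mp hle)
        have hτj : (j : ℕ) ≤ ((τ j : Fin n) : ℕ) := hB.mpr le_rfl
        have hdv := Fin.lt_def.mp hd
        omega
      have hthr : ∀ j' : Fin c.len, n - (c.I j').card ≠ (j : ℕ) :=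
        t_ne_of_constraint j.isLt hcon
      set τ' := s.trans τ with hτ'
      have ht' : tOK c τ' := by
        intro j' a
        rw [hτ', Equiv.trans_apply]
        rw [ht j' (s a)]
        exact tle_swap hij (hthr j')
      have hdec : invCount τ' < invCount τ := invCount_lt hij hd
      have hrec := IH (invCount τ') (hN ▸ hdec) τ' rfl ht'
      have hgen : Mmat s (fun _ => (1 : ℂ)) ∈ genBy (HIgens ζ c) :=
        genBy_of_mem ⟨j, hcon, (sgen_eq_swap ζ hij).symm⟩
      have h1eq : s.trans τ' = τ := Equiv.ext fun a => by
        simp [hτ', Equiv.trans_apply, hs, Equiv.swap_apply_self]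
      have heq : Mmat τ (fun _ => (1 : ℂ)) =
          Mmat s (fun _ => (1 : ℂ)) * Mmat τ' (fun _ => (1 : ℂ)) := by
        rw [Mmat_mul, h1eq]
        simp only [one_mul]
      rw [heq]
      exact genBy_mul hgen hrec

/-! ### Diagonal matrices in the subgroup -/

lemma single_mem (hr : 2 ≤ r) {ζ : ℂ} (hζ : IsPrimitiveRoot ζ r) (c : DecChain r n)
    {a : Fin n} (ha : (a : ℕ) < n - c.top.card) {z : ℂ} (hz : z ^ r = 1) :
    Mmat (1 : Equiv.Perm (Fin n)) (fun x => if x = a then z else 1) ∈ genBy (HIgens ζ c) := by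
  haveI : NeZero r := ⟨by omega⟩
  haveI : NeZero n := ⟨by have := a.isLt; omega⟩
  obtain ⟨m, _, hzm⟩ := hζ.eq_pow_of_pow_eq_one hz
  have hctop : c.top.card < n := by have := card_top_le c; omega
  have hs0 : sgen ζ 0 ∈ HIgens ζ c := by
    refine ⟨⟨0, by omega⟩, fun j' => ?_, rfl⟩
    have h1 := card_I_le_top c j'
    show n - 0 ≠ (c.I j').card
    omega
  have hpow : ∀ m : ℕ, Mmat (1 : Equiv.Perm (Fin n)) (fun x : Fin n => if (x : ℕ) = 0 then ζ ^ m else 1)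
      ∈ genBy (HIgens ζ c) := by
    intro m
    induction m with
    | zero =>
      have he : (fun x : Fin n => if (x : ℕ) = 0 then ζ ^ 0 else 1) =
          fun _ : Fin n => (1 : ℂ) := by funext x; simp
      rw [he, Mmat_one]; exact genBy_one
    | succ m ih =>
      have heq : Mmat (1 : Equiv.Perm (Fin n))
            (fun x : Fin n => if (x : ℕ) = 0 then ζ ^ (m + 1) else 1) =
          Mmat (1 : Equiv.Perm (Fin n)) (fun x : Fin n => if (x : ℕ) = 0 then ζ else 1) *
          Mmat (1 : Equiv.Perm (Fin n)) (fun x : Fin n => if (x : ℕ) = 0 then ζ ^ m else 1) := by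
        rw [Mmat_mul]
        have h2 : (1 : Equiv.Perm (Fin n)).trans (1 : Equiv.Perm (Fin n)) = 1 := rfl
        rw [h2]
        refine congrArg _ (funext fun x => ?_)
        rw [Equiv.Perm.one_apply]
        by_cases hx : (x : ℕ) = 0
        · rw [if_pos hx, if_pos hx, if_pos hx]; ring
        · rw [if_neg hx, if_neg hx, if_neg hx]; ring
      rw [heq]
      have hfirst : Mmat (1 : Equiv.Perm (Fin n))
          (fun x : Fin n => if (x : ℕ) = 0 then ζ else 1) ∈ genBy (HIgens ζ c) := by
        rw [← sgen_zero]; exact genBy_of_mem hs0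
      exact genBy_mul hfirst ih
  set π := Equiv.swap (0 : Fin n) a with hπ
  have hπt : tOK c π := by
    intro j' x
    have hcard := card_I_le_top c j'
    have ht1 : (a : ℕ) < n - (c.I j').card := by omega
    rcases eq_or_ne x 0 with rfl | hx0
    · rw [hπ, Equiv.swap_apply_left]
      exact iff_of_false (by omega) (by simp only [Fin.val_zero]; omega)
    · rcases eq_or_ne x a with rfl | hxa
      · rw [hπ, Equiv.swap_apply_right]
        exact iff_of_false (by simp only [Fin.val_zero]; omega) (by omega)
      · rw [hπ, Equiv.swap_apply_of_ne_of_ne hx0 hxa]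
  have key : Mmat (1 : Equiv.Perm (Fin n)) (fun x => if x = a then z else 1) =
      Mmat π (fun _ => 1) *
        Mmat (1 : Equiv.Perm (Fin n)) (fun x : Fin n => if (x : ℕ) = 0 then ζ ^ m else 1) *
      Mmat π (fun _ => 1) := by
    rw [Mmat_mul, Mmat_mul]
    have hp : ((π.trans (1 : Equiv.Perm (Fin n))).trans π) = (1 : Equiv.Perm (Fin n)) := by
      ext x
      simp [hπ, Equiv.trans_apply, Equiv.swap_apply_self]
    rw [hp]
    refine congrArg _ (funext fun x => ?_)
    simp only [one_mul, mul_one, Equiv.trans_apply, Equiv.Perm.one_apply]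
    rcases eq_or_ne x a with rfl | hxa
    · rw [if_pos rfl, hπ, Equiv.swap_apply_right]
      rw [if_pos (by simp [Fin.val_zero])]
      exact hzm.symm
    · rw [if_neg hxa]
      have hne0 : ¬ (((π x : Fin n) : ℕ) = 0) := by
        intro h0
        have hpx : π x = 0 := Fin.ext (by simpa using h0)
        have h2 := congrArg π hpx
        rw [hπ, Equiv.swap_apply_self, Equiv.swap_apply_left] at h2
        exact hxa h2
      rw [if_neg hne0]
  rw [key]
  exact genBy_mul (genBy_mul (perm_mem ζ c hπt) (hpow m)) (perm_mem ζ c hπt)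

lemma diag_mem (hr : 2 ≤ r) {ζ : ℂ} (hζ : IsPrimitiveRoot ζ r) (c : DecChain r n)
    {g : Fin n → ℂ} (hr1 : ∀ a, g a ^ r = 1)
    (hg : ∀ a : Fin n, n - c.top.card ≤ (a : ℕ) → g a = 1) :
    Mmat (1 : Equiv.Perm (Fin n)) g ∈ genBy (HIgens ζ c) := by
  classical
  have key : ∀ s : Finset (Fin n), ∀ g : Fin n → ℂ, (∀ a, g a ^ r = 1) →
      (∀ a : Fin n, n - c.top.card ≤ (a : ℕ) → g a = 1) →
      (∀ x, x ∉ s → g x = 1) → Mmat (1 : Equiv.Perm (Fin n)) g ∈ genBy (HIgens ζ c) := by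
    intro s
    induction s using Finset.induction_on with
    | empty =>
      intro g _ _ h
      have hgone : g = fun _ => 1 := funext fun x => h x (Finset.notMem_empty x)
      rw [hgone, Mmat_one]; exact genBy_one
    | @insert a s ha ih =>
      intro g hg1 hg2 hg3
      set g' := Function.update g a 1 with hg'
      have hsplit : g = fun x => (if x = a then g a else 1) * g' x := by
        funext x
        rcases eq_or_ne x a with rfl | hx
        · simp [hg', Function.update_self]
        · simp [hg', Function.update_of_ne hx, hx]
      have hmul : Mmat (1 : Equiv.Perm (Fin n)) g =
          Mmat (1 : Equiv.Perm (Fin n)) (fun x => if x = a then g a else 1) * Mmat (1 : Equiv.Perm (Fin n)) g' := by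
        rw [Mmat_mul]
        have h2 : (1 : Equiv.Perm (Fin n)).trans (1 : Equiv.Perm (Fin n)) = 1 := rfl
        rw [h2]
        refine congrArg _ (funext fun x => ?_)
        simp only [Equiv.Perm.one_apply]
        exact congrFun hsplit x
      have hfac : Mmat (1 : Equiv.Perm (Fin n)) (fun x => if x = a then g a else 1)
          ∈ genBy (HIgens ζ c) := by
        by_cases hta : n - c.top.card ≤ (a : ℕ)
        · have hga : g a = 1 := hg2 a hta
          rw [hga]
          have he : (fun x : Fin n => if x = a then (1 : ℂ) else 1) = fun _ => (1 : ℂ) := by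
            funext x; simp
          rw [he, Mmat_one]; exact genBy_one
        · exact single_mem hr hζ c (by omega) (hg1 a)
      have hg'1 : ∀ x, g' x ^ r = 1 := by
        intro x
        rcases eq_or_ne x a with rfl | hx
        · simp [hg', Function.update_self]
        · rw [hg', Function.update_of_ne hx]; exact hg1 x
      have hg'2 : ∀ x : Fin n, n - c.top.card ≤ (x : ℕ) → g' x = 1 := by
        intro x hx
        rcases eq_or_ne x a with rfl | hxa
        · simp [hg', Function.update_self]
        · rw [hg', Function.update_of_ne hxa]; exact hg2 x hx
      have hg'3 : ∀ x, x ∉ s → g' x = 1 := by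
        intro x hx
        rcases eq_or_ne x a with rfl | hxa
        · simp [hg', Function.update_self]
        · rw [hg', Function.update_of_ne hxa]
          exact hg3 x (by simp [Finset.mem_insert, hxa, hx])
      rw [hmul]
      exact genBy_mul hfac (ih g' hg'1 hg'2 hg'3)
  exact key Finset.univ g hr1 hg (fun x hx => absurd (Finset.mem_univ x) hx)

/-- Main generation lemma: any tail-preserving monomial matrix with trivial tail
entries lies in the subgroup generated by `HIgens`. -/
lemma mem_genBy_of (hr : 2 ≤ r) {ζ : ℂ} (hζ : IsPrimitiveRoot ζ r) (c : DecChain r n)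
    {τ : Equiv.Perm (Fin n)} {g : Fin n → ℂ} (ht : tOK c τ)
    (hr1 : ∀ a, g a ^ r = 1) (hg : ∀ a : Fin n, n - c.top.card ≤ (a : ℕ) → g a = 1) :
    Mmat τ g ∈ genBy (HIgens ζ c) := by
  have hsplit : Mmat τ g =
      Mmat τ (fun _ => 1) * Mmat (1 : Equiv.Perm (Fin n)) (fun x => g (τ.symm x)) := by
    rw [Mmat_mul]
    have h1 : τ.trans (1 : Equiv.Perm (Fin n)) = τ := by ext x; simp
    rw [h1]
    refine congrArg _ (funext fun x => ?_)
    simp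
  rw [hsplit]
  refine genBy_mul (perm_mem ζ c ht) (diag_mem hr hζ c (fun a => hr1 _) ?_)
  intro a ha
  refine hg (τ.symm a) ?_
  have h2 := tOK_top ht (τ.symm a)
  rw [τ.apply_symm_apply] at h2
  exact h2.mp ha

/-! ### Step A: left multiplication preserves `CIset` -/

lemma mul_mem_CIset {ζ : ℂ} {c : DecChain r n} {τ : Equiv.Perm (Fin n)} {g : Fin n → ℂ}
    (ht : tOK c τ) (h0 : ∀ a, g a ≠ 0) (hr1 : ∀ a, g a ^ r = 1)
    (hg : ∀ a : Fin n, n - c.top.card ≤ (a : ℕ) → g a = 1)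
    {M : Matrix (Fin n) (Fin n) ℂ} (hM : M ∈ CIset ζ c) : Mmat τ g * M ∈ CIset ζ c := by
  obtain ⟨hSrn, hrep⟩ := hM
  obtain ⟨σ, f, hf0, hfr, rfl⟩ := exists_Mmat hSrn
  rw [repCond_iff hf0] at hrep
  obtain ⟨h1, h2⟩ := hrep
  rw [Mmat_mul]
  have h0' : ∀ a, g a * f (τ a) ≠ 0 := fun a => mul_ne_zero (h0 a) (hf0 _)
  refine ⟨Mmat_mem_Srn _ h0'
    (fun a => by rw [mul_pow, hr1 a, hfr (τ a), one_mul]), ?_⟩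
  rw [repCond_iff h0']
  constructor
  · intro j a
    rw [Equiv.trans_apply, ← h1 j (τ a)]
    exact (ht j a).symm
  · intro i h a hσ
    rw [Equiv.trans_apply] at hσ
    have hf := h2 i h (τ a) hσ
    have hmem : σ (τ a) ∈ c.top := hσ ▸ h
    have hta : n - c.top.card ≤ ((τ a : Fin n) : ℕ) := (cond1_top h1 (τ a)).mpr hmem
    have hga : g a = 1 := hg a ((tOK_top ht a).mp hta)
    rw [hga, one_mul]
    exact hf

/-- Every generator (and its inverse) is a good monomial matrix. -/
lemma gens_ok (hr : 2 ≤ r) (hn : 1 ≤ n) {ζ : ℂ} (hζ : IsPrimitiveRoot ζ r)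
    (c : DecChain r n) {x : Matrix (Fin n) (Fin n) ℂ} (hx : x ∈ HIgens ζ c) :
    ∃ (τ : Equiv.Perm (Fin n)) (g : Fin n → ℂ),
      tOK c τ ∧ (∀ a, g a ≠ 0) ∧ (∀ a, g a ^ r = 1) ∧
      (∀ a : Fin n, n - c.top.card ≤ (a : ℕ) → g a = 1) ∧ x = Mmat τ g := by
  obtain ⟨i, hcon, rfl⟩ := hx
  have hζ0 : ζ ≠ 0 := hζ.ne_zero (by omega)
  rcases Nat.eq_zero_or_pos (i : ℕ) with hi0 | hip
  · refine ⟨1, fun a => if (a : ℕ) = 0 then ζ else 1, tOK_one c, ?_, ?_, ?_, ?_⟩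
    · intro a
      show (if (a : ℕ) = 0 then ζ else 1) ≠ 0
      split
      · exact hζ0
      · exact one_ne_zero
    · intro a
      show (if (a : ℕ) = 0 then ζ else 1) ^ r = 1
      split
      · exact hζ.pow_eq_one
      · exact one_pow r
    · intro a ha
      have hct : c.top.card < n := by
        rcases Nat.eq_zero_or_pos c.len with h | h
        · rw [top_empty c h]; simp; omega
        · rw [top_eq c h]
          have hle := card_I_le c ⟨c.len - 1, by omega⟩
          have hne := hcon ⟨c.len - 1, by omega⟩
          rw [hi0] at hne
          omega
      have hane : (a : ℕ) ≠ 0 := by omega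
      show (if (a : ℕ) = 0 then ζ else 1) = 1
      rw [if_neg hane]
    · rw [hi0]; exact sgen_zero ζ
  · have hilt := i.isLt
    have hii : ((⟨(i : ℕ) - 1, by omega⟩ : Fin n) : ℕ) + 1 = (i : ℕ) := by
      show (i : ℕ) - 1 + 1 = (i : ℕ); omega
    exact ⟨Equiv.swap ⟨(i : ℕ) - 1, by omega⟩ i, fun _ => 1,
      fun j' a => tle_swap hii (t_ne_of_constraint hilt hcon j'),
      fun _ => one_ne_zero, fun _ => one_pow r, fun _ _ => rfl, sgen_eq_swap ζ hii⟩

end Stmt12Aux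
open Stmt12Aux

/-- Definition 6.2 / Figure 5: for any representative `A ∈ S(r,n)`
satisfying conditions (i) and (ii), the right coset `H_I · A` equals the set of all
matrices of `S(r,n)` satisfying conditions (i) and (ii); in particular `C_I` is
independent of the choice of `A`. -/
theorem stmt12 (r n : ℕ) (hr : 2 ≤ r) (hn : 1 ≤ n) (ζ : ℂ) (hζ : IsPrimitiveRoot ζ r)
    (c : DecChain r n) (A : Matrix (Fin n) (Fin n) ℂ)
    (hA : A ∈ Srn r n) (hrep : repCond ζ c A) :
    {M | ∃ h ∈ genBy (HIgens ζ c), M = h * A} = CIset ζ c := by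
  ext M
  simp only [Set.mem_setOf_eq]
  constructor
  · rintro ⟨h, ⟨l, hl, rfl⟩, rfl⟩
    revert hl
    induction l with
    | nil =>
      intro _
      rw [List.prod_nil, one_mul]
      exact ⟨hA, hrep⟩
    | cons B t ih =>
      intro hl
      rw [List.prod_cons, mul_assoc]
      have hM : t.prod * A ∈ CIset ζ c := ih fun B' hB' => hl B' (List.mem_cons_of_mem _ hB')
      obtain ⟨x, hx, hBx⟩ := hl B (List.mem_cons_self)
      obtain ⟨τ, g, ht, h0, hr1, hg, rfl⟩ := gens_ok hr hn hζ c hx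
      rcases hBx with rfl | rfl
      · exact mul_mem_CIset ht h0 hr1 hg hM
      · rw [Mmat_inv _ h0]
        refine mul_mem_CIset (tOK_symm ht) (fun a => inv_ne_zero (h0 _))
          (fun a => by rw [inv_pow, hr1, inv_one]) ?_ hM
        intro a ha
        rw [hg (τ.symm a) ((tOK_top (tOK_symm ht) a).mpr ha), inv_one]
  · rintro ⟨hA'Srn, hA'rep⟩
    obtain ⟨σ, f, hf0, hfr, rfl⟩ := exists_Mmat hA
    obtain ⟨σ', f', hf'0, hf'r, rfl⟩ := exists_Mmat hA'Srn
    rw [repCond_iff hf0] at hrep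
    rw [repCond_iff hf'0] at hA'rep
    obtain ⟨h1, h2⟩ := hrep
    obtain ⟨h1', h2'⟩ := hA'rep
    set τ : Equiv.Perm (Fin n) := σ'.trans σ.symm with hτ
    set g : Fin n → ℂ := fun a => f' a * (f (τ a))⁻¹ with hgdef
    have hζ0 : ζ ≠ 0 := hζ.ne_zero (by omega)
    have hστ : ∀ a, σ (τ a) = σ' a := fun a => by
      simp [hτ, Equiv.trans_apply]
    have ht : tOK c τ := by
      intro j a
      rw [h1 j (τ a), hστ a]
      exact (h1' j a).symm
    refine ⟨Mmat τ g, mem_genBy_of hr hζ c ht ?_ ?_, ?_⟩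
    · intro a
      simp only [hgdef]
      rw [mul_pow, inv_pow, hf'r a, hfr (τ a), inv_one, mul_one]
    · intro a ha
      have hmem : σ' a ∈ c.top := (cond1_top h1' a).mp ha
      have e1 : f' a = ζ ^ (-(((c.dec (σ' a) hmem).val : ℤ))) := h2' (σ' a) hmem a rfl
      have e2 : f (τ a) = ζ ^ (-(((c.dec (σ' a) hmem).val : ℤ))) := h2 (σ' a) hmem (τ a) (hστ a)
      simp only [hgdef]
      rw [e1, e2, mul_inv_cancel₀ (zpow_ne_zero _ hζ0)]
    · rw [Mmat_mul]
      have hperm : τ.trans σ = σ' := Equiv.ext fun a => by simp [hτ, Equiv.trans_apply]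
      rw [hperm]
      refine congrArg _ (funext fun a => ?_)
      simp only [hgdef]
      rw [mul_assoc, inv_mul_cancel₀ (hf0 (τ a)), mul_one]
end
end

section
/- For decorated nested chains I and J of subsets of {1,…,n}, C_I ⊆ C_J if and only if I refines J. -/
open Finset

noncomputable section

/-- The chain `c` refines the chain `d`: every set of `d` occurs among the sets of `c`,
and the decoration of `d` is the restriction of the decoration of `c`. -/
def Refines {r n : ℕ} (c d : DecChain r n) : Prop :=
  (∀ j' : Fin d.len, ∃ j : Fin c.len, c.I j = d.I j') ∧
  ∀ (i : Fin n) (hd : i ∈ d.top) (hc : i ∈ c.top), d.dec i hd = c.dec i hc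
namespace Stmt13Aux

variable {n : ℕ}

/-- Monomial matrix: nonzero entry of column `b` is `z b`, located in row `σ b`. -/
def mon (σ : Equiv.Perm (Fin n)) (z : Fin n → ℂ) : Matrix (Fin n) (Fin n) ℂ :=
  Matrix.of fun a b => if a = σ b then z b else 0

lemma mon_apply (σ : Equiv.Perm (Fin n)) (z : Fin n → ℂ) (a b : Fin n) :
    mon σ z a b = if a = σ b then z b else 0 := rfl

lemma mon_mul (σ τ : Equiv.Perm (Fin n)) (z w : Fin n → ℂ) :
    mon σ z * mon τ w = mon (σ * τ) (fun b => z (τ b) * w b) := by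
  ext a b
  simp only [mon, Matrix.mul_apply, Matrix.of_apply]
  rw [Finset.sum_eq_single (τ b)]
  · by_cases h : a = σ (τ b) <;> simp [h, Equiv.Perm.mul_apply]
  · intro c _ hc; simp [hc]
  · simp

lemma mon_eq_one {z : Fin n → ℂ} (h : ∀ b, z b = 1) : mon (1 : Equiv.Perm (Fin n)) z = 1 := by
  ext a b
  simp only [mon, Matrix.of_apply, Equiv.Perm.one_apply, Matrix.one_apply, h b]

lemma mon_one : mon (1 : Equiv.Perm (Fin n)) (fun _ => (1 : ℂ)) = 1 := mon_eq_one fun _ => rfl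

lemma mon_congr (σ : Equiv.Perm (Fin n)) {f g : Fin n → ℂ} (h : ∀ b, f b = g b) :
    mon σ f = mon σ g := congrArg _ (funext h)

lemma mon_inj {σ τ : Equiv.Perm (Fin n)} {z w : Fin n → ℂ}
    (h : mon σ z = mon τ w) (hz : ∀ b, z b ≠ 0) (b : Fin n) : τ b = σ b ∧ w b = z b := by
  have h2 : mon σ z (σ b) b = mon τ w (σ b) b := by rw [h]
  simp only [mon_apply, if_pos rfl] at h2
  by_cases hc : σ b = τ b
  · refine ⟨hc.symm, ?_⟩
    rw [if_pos hc] at h2; exact h2.symm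
  · rw [if_neg hc] at h2; exact absurd h2 (hz b)

lemma mon_ne_zero_iff {σ : Equiv.Perm (Fin n)} {z : Fin n → ℂ} (hz : ∀ b, z b ≠ 0)
    (a b : Fin n) : mon σ z a b ≠ 0 ↔ a = σ b := by
  rw [mon_apply]
  split_ifs with h
  · simp [h, hz b]
  · simp [h]

/-- Extraction of the monomial structure of an element of `S(r,n)`. -/
lemma srn_extract {r : ℕ} {A : Matrix (Fin n) (Fin n) ℂ} (hA : A ∈ Srn r n) :
    ∃ (σ : Equiv.Perm (Fin n)) (z : Fin n → ℂ),
      (∀ b, z b ≠ 0) ∧ (∀ b, z b ^ r = 1) ∧ A = mon σ z := by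
  obtain ⟨hrow, hcol, hpow⟩ := hA
  choose f hf hfu using hcol
  have hinj : Function.Injective f := by
    intro b b' hbb
    obtain ⟨cc, hcc, hccu⟩ := hrow (f b)
    have h1 := hccu b (hf b)
    have h2 := hccu b' (by rw [hbb]; exact hf b')
    rw [h1, h2]
  let σ : Equiv.Perm (Fin n) := Equiv.ofBijective f (Finite.injective_iff_bijective.mp hinj)
  refine ⟨σ, fun b => A (f b) b, fun b => hf b, fun b => hpow _ _ (hf b), ?_⟩
  ext a b
  show A a b = if a = σ b then A (f b) b else 0
  have hσ : σ b = f b := rfl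
  rw [hσ]
  split_ifs with h
  · rw [h]
  · by_contra hne
    exact h (hfu b a hne)

/-- Condition (i) of `repCond` in monomial coordinates. -/
lemma rep1 {r : ℕ} {ζ : ℂ} {c : DecChain r n} {σ : Equiv.Perm (Fin n)} {z : Fin n → ℂ}
    (hrc : repCond ζ c (mon σ z)) (hz : ∀ b, z b ≠ 0) (j : Fin c.len) (b : Fin n) :
    b ∈ c.I j ↔ n - (c.I j).card ≤ ((σ b : Fin n) : ℕ) := by
  have := Set.ext_iff.mp (hrc.1 j) b
  simp only [Finset.coe_sort_coe, Finset.mem_coe, Set.mem_setOf_eq] at this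
  rw [this]
  constructor
  · rintro ⟨a, ha, hne⟩
    rwa [(mon_ne_zero_iff hz a b).mp hne] at ha
  · intro h
    exact ⟨σ b, h, (mon_ne_zero_iff hz _ b).mpr rfl⟩

/-- Condition (ii) of `repCond` in monomial coordinates. -/
lemma rep2 {r : ℕ} {ζ : ℂ} {c : DecChain r n} {σ : Equiv.Perm (Fin n)} {z : Fin n → ℂ}
    (hrc : repCond ζ c (mon σ z)) (hz : ∀ b, z b ≠ 0) (i : Fin n) (h : i ∈ c.top) :
    z i = ζ ^ (-(((c.dec i h).val : ℤ))) := by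
  have := hrc.2 i h (σ i) ((mon_ne_zero_iff hz _ i).mpr rfl)
  rwa [mon_apply, if_pos rfl] at this

section GenBy

variable {S S' : Set (Matrix (Fin n) (Fin n) ℂ)}

lemma one_mem_genBy : (1 : Matrix (Fin n) (Fin n) ℂ) ∈ genBy S :=
  ⟨[], by simp, by simp⟩

lemma mem_genBy_of_mem {x : Matrix (Fin n) (Fin n) ℂ} (hx : x ∈ S) : x ∈ genBy S :=
  ⟨[x], by rintro B hB; rw [List.mem_singleton] at hB; exact ⟨x, hx, Or.inl hB⟩, by simp⟩

lemma mul_mem_genBy {x y : Matrix (Fin n) (Fin n) ℂ} (hx : x ∈ genBy S) (hy : y ∈ genBy S) :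
    x * y ∈ genBy S := by
  obtain ⟨l, hl, hlp⟩ := hx
  obtain ⟨l', hl', hlp'⟩ := hy
  exact ⟨l ++ l', by
    intro B hB
    rcases List.mem_append.mp hB with h | h
    · exact hl B h
    · exact hl' B h, by rw [List.prod_append, hlp, hlp']⟩

lemma genBy_mono (h : S ⊆ S') : genBy S ⊆ genBy S' := by
  rintro x ⟨l, hl, hlp⟩
  exact ⟨l, fun B hB => by obtain ⟨y, hy, h2⟩ := hl B hB; exact ⟨y, h hy, h2⟩, hlp⟩

end GenBy

lemma swap_val (p q b : Fin n) :
    ((Equiv.swap p q b : Fin n) : ℕ) = Equiv.swap (p : ℕ) (q : ℕ) (b : ℕ) := by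
  simp only [Equiv.swap_apply_def]
  split_ifs with h1 h2 h3 h4 h5 h6 <;>
    first
      | rfl
      | (exact absurd (Fin.ext (by assumption)) (by assumption))
      | (exact absurd (congrArg Fin.val (by assumption)) (by assumption))

lemma sgen_zero {ζ : ℂ} :
    (sgen ζ 0 : Matrix (Fin n) (Fin n) ℂ) =
      mon 1 (fun b => if (b : ℕ) = 0 then ζ else 1) := by
  ext a b
  simp only [sgen, reduceIte, Matrix.diagonal_apply, mon_apply, Equiv.Perm.one_apply]
  by_cases h : a = b
  · simp [h]
  · simp [h]

lemma sgen_swap {ζ : ℂ} {i : ℕ} (h1 : 1 ≤ i) (h2 : i < n) :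
    (sgen ζ i : Matrix (Fin n) (Fin n) ℂ) =
      mon (Equiv.swap (⟨i - 1, by omega⟩ : Fin n) ⟨i, h2⟩) (fun _ => (1 : ℂ)) := by
  ext a b
  have key : (Equiv.swap (i - 1 : ℕ) i (a : ℕ) = (b : ℕ)) ↔
      (a = Equiv.swap (⟨i - 1, by omega⟩ : Fin n) ⟨i, h2⟩ b) := by
    constructor
    · intro h
      have hsf : ((Equiv.swap (⟨i - 1, by omega⟩ : Fin n) ⟨i, h2⟩ a : Fin n) : ℕ) = (b : ℕ) := by
        rw [swap_val]; exact h
      have : Equiv.swap (⟨i - 1, by omega⟩ : Fin n) ⟨i, h2⟩ a = b := Fin.ext hsf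
      rw [← this, Equiv.swap_apply_self]
    · intro h
      subst h
      have hv := swap_val (⟨i - 1, by omega⟩ : Fin n) ⟨i, h2⟩
        (Equiv.swap (⟨i - 1, by omega⟩ : Fin n) ⟨i, h2⟩ b)
      rw [Equiv.swap_apply_self] at hv
      exact hv.symm
  simp only [sgen, if_neg (by omega : ¬ i = 0), Matrix.of_apply, mon_apply]
  rw [if_congr key rfl rfl]

end Stmt13Aux

namespace Stmt13Aux

variable {n : ℕ}

section Chain

variable {r : ℕ} {ζ : ℂ} {d : DecChain r n}

/-- `x` lies weakly below some cut of the chain `d` (0-based rows `n - |I_j| ≤ x`). -/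
def cutLE (d : DecChain r n) (x : Fin n) : Prop :=
  ∃ j : Fin d.len, n - (d.I j).card ≤ (x : ℕ)

/-- `π` preserves each of the blocks `{x : n - |I_j| ≤ x}`. -/
def bp (d : DecChain r n) (π : Equiv.Perm (Fin n)) : Prop :=
  ∀ (j : Fin d.len) (x : Fin n),
    n - (d.I j).card ≤ ((π x : Fin n) : ℕ) ↔ n - (d.I j).card ≤ (x : ℕ)

lemma bp_one : bp d 1 := fun _ _ => Iff.rfl

lemma bp_mul {π τ : Equiv.Perm (Fin n)} (hπ : bp d π) (hτ : bp d τ) : bp d (π * τ) :=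
  fun j x => by rw [Equiv.Perm.mul_apply]; exact (hπ j (τ x)).trans (hτ j x)

/-- The elements of the subgroup `H_I`, described explicitly. -/
def Good (r : ℕ) (d : DecChain r n) (M : Matrix (Fin n) (Fin n) ℂ) : Prop :=
  ∃ (π : Equiv.Perm (Fin n)) (z : Fin n → ℂ), M = mon π z ∧ (∀ b, z b ≠ 0) ∧
    (∀ b, z b ^ r = 1) ∧ bp d π ∧ ∀ x, cutLE d x → z x = 1

lemma card_le_n (d : DecChain r n) (j : Fin d.len) : (d.I j).card ≤ n :=
  le_trans (Finset.card_le_univ _) (by simp)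

lemma good_one : Good r d 1 :=
  ⟨1, fun _ => 1, mon_one.symm, fun _ => one_ne_zero, fun _ => one_pow r, bp_one,
    fun _ _ => rfl⟩

lemma good_mul {M N : Matrix (Fin n) (Fin n) ℂ} (hM : Good r d M) (hN : Good r d N) :
    Good r d (M * N) := by
  obtain ⟨π, z, rfl, hz0, hzr, hbpπ, hz1⟩ := hM
  obtain ⟨τ, w, rfl, hw0, hwr, hbpτ, hw1⟩ := hN
  refine ⟨π * τ, fun b => z (τ b) * w b, mon_mul π τ z w,
    fun b => mul_ne_zero (hz0 _) (hw0 _),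
    fun b => by rw [mul_pow, hzr, hwr, one_mul], bp_mul hbpπ hbpτ, ?_⟩
  intro x hx
  show z (τ x) * w x = 1
  rw [hw1 x hx, mul_one]
  apply hz1
  obtain ⟨j, hj⟩ := hx
  exact ⟨j, (hbpτ j x).mpr hj⟩

lemma good_gen (hr : 2 ≤ r) (hζ : IsPrimitiveRoot ζ r) {x : Matrix (Fin n) (Fin n) ℂ}
    (hx : x ∈ HIgens ζ d) : Good r d x ∧ Good r d x⁻¹ := by
  obtain ⟨i, hcut, rfl⟩ := hx
  have hζ0 : ζ ≠ 0 := hζ.ne_zero (by omega)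
  have hζr : ζ ^ r = 1 := hζ.pow_eq_one
  by_cases hi : (i : ℕ) = 0
  · rw [hi, sgen_zero]
    have hgood : ∀ u : ℂ, u ≠ 0 → u ^ r = 1 →
        Good r d (mon 1 (fun b : Fin n => if (b : ℕ) = 0 then u else 1)) := by
      intro u hu0 hur
      refine ⟨1, _, rfl, ?_, ?_, bp_one, ?_⟩
      · intro b; show (if (b : ℕ) = 0 then u else 1) ≠ 0; split_ifs
        · exact hu0
        · exact one_ne_zero
      · intro b; show (if (b : ℕ) = 0 then u else 1) ^ r = 1; split_ifs
        · exact hur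
        · exact one_pow r
      · intro xx hxx
        show (if (xx : ℕ) = 0 then u else 1) = 1
        split_ifs with h0
        · exfalso
          obtain ⟨j, hj⟩ := hxx
          have hcle := card_le_n d j
          have hci := hcut j
          rw [hi] at hci
          omega
        · rfl
    constructor
    · exact hgood ζ hζ0 hζr
    · have hinv : (mon (1 : Equiv.Perm (Fin n)) (fun b => if (b : ℕ) = 0 then ζ else 1))⁻¹ =
          mon 1 (fun b : Fin n => if (b : ℕ) = 0 then ζ ^ (r - 1) else 1) := by
        apply Matrix.inv_eq_right_inv
        rw [mon_mul, mul_one]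
        apply mon_eq_one
        intro b
        rw [Equiv.Perm.one_apply]
        split_ifs with h
        · have hr1 : r - 1 + 1 = r := by omega
          rw [← pow_succ', hr1, hζr]
        · rw [one_mul]
      rw [hinv]
      exact hgood _ (pow_ne_zero _ hζ0) (by rw [← pow_mul, mul_comm, pow_mul, hζr, one_pow])
  · have h1 : 1 ≤ (i : ℕ) := by omega
    rw [sgen_swap h1 i.isLt]
    set pf : Fin n := ⟨(i : ℕ) - 1, by omega⟩ with hpfd
    set qf : Fin n := ⟨(i : ℕ), i.isLt⟩ with hqfd
    have hpv : (pf : ℕ) = (i : ℕ) - 1 := rfl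
    have hqv : (qf : ℕ) = (i : ℕ) := rfl
    have hin : (i : ℕ) < n := i.isLt
    have hswbp : bp d (Equiv.swap pf qf) := by
      intro j xx
      have hcle := card_le_n d j
      have hci := hcut j
      rcases eq_or_ne xx pf with rfl | hx1
      · rw [Equiv.swap_apply_left]
        omega
      · rcases eq_or_ne xx qf with rfl | hx2
        · rw [Equiv.swap_apply_right]
          omega
        · rw [Equiv.swap_apply_of_ne_of_ne hx1 hx2]
    have hgood : Good r d (mon (Equiv.swap pf qf) (fun _ => (1 : ℂ))) :=
      ⟨_, _, rfl, fun _ => one_ne_zero, fun _ => one_pow r, hswbp, fun _ _ => rfl⟩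
    refine ⟨hgood, ?_⟩
    have hinv : (mon (Equiv.swap pf qf) (fun _ => (1 : ℂ)))⁻¹ =
        mon (Equiv.swap pf qf) (fun _ => (1 : ℂ)) := by
      apply Matrix.inv_eq_right_inv
      rw [mon_mul, Equiv.swap_mul_self]
      exact mon_eq_one fun b => one_mul 1
    rw [hinv]
    exact hgood

lemma genBy_good (hr : 2 ≤ r) (hζ : IsPrimitiveRoot ζ r) {M : Matrix (Fin n) (Fin n) ℂ}
    (hM : M ∈ genBy (HIgens ζ d)) : Good r d M := by
  obtain ⟨l, hl, rfl⟩ := hM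
  induction l with
  | nil => exact good_one
  | cons x l ih =>
    rw [List.prod_cons]
    refine good_mul ?_ (ih fun B hB => hl B (List.mem_cons_of_mem x hB))
    obtain ⟨y, hy, h2⟩ := hl x List.mem_cons_self
    rcases h2 with rfl | rfl
    · exact (good_gen hr hζ hy).1
    · exact (good_gen hr hζ hy).2

/-- Block-preserving permutation matrices lie in the subgroup generated by `HIgens`. -/
lemma perm_mem (ζ : ℂ) (d : DecChain r n) :
    ∀ (m : ℕ) (π : Equiv.Perm (Fin n)), bp d π → (∀ x : Fin n, m ≤ (x : ℕ) → π x = x) →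
      mon π (fun _ => (1 : ℂ)) ∈ genBy (HIgens ζ d) := by
  intro m
  induction m with
  | zero =>
    intro π hbp hfix
    have hπ1 : π = 1 := Equiv.ext fun x => hfix x (Nat.zero_le _)
    rw [hπ1, mon_one]
    exact one_mem_genBy
  | succ m ih =>
    intro π hbp hfix
    by_cases hmn : m < n
    · suffices aux : ∀ (t : ℕ) (π : Equiv.Perm (Fin n)), bp d π →
          (∀ x : Fin n, m + 1 ≤ (x : ℕ) → π x = x) →
          m - ((π.symm ⟨m, hmn⟩ : Fin n) : ℕ) = t →
          mon π (fun _ => (1 : ℂ)) ∈ genBy (HIgens ζ d) by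
        exact aux _ π hbp hfix rfl
      intro t
      induction t with
      | zero =>
        intro π hbp hfix ht
        set pf : Fin n := π.symm ⟨m, hmn⟩ with hpf
        have hπpf : π pf = ⟨m, hmn⟩ := Equiv.apply_symm_apply π _
        have hple : (pf : ℕ) ≤ m := by
          by_contra hgt
          push_neg at hgt
          have h1 := hfix pf hgt
          rw [hπpf] at h1
          have h2 := congrArg Fin.val h1
          simp only [] at h2
          omega
        apply ih π hbp
        intro x hx
        rcases eq_or_lt_of_le hx with heq | hlt
        · have hxpf : x = pf := Fin.ext (by omega)
          rw [hxpf, hπpf]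
          exact Fin.ext (show m = (pf : ℕ) by omega)
        · exact hfix x hlt
      | succ t iht =>
        intro π hbp hfix ht
        set pf : Fin n := π.symm ⟨m, hmn⟩ with hpf
        have hπpf : π pf = ⟨m, hmn⟩ := Equiv.apply_symm_apply π _
        have hpm : (pf : ℕ) < m := by omega
        have hq : (pf : ℕ) + 1 < n := by omega
        set qf : Fin n := ⟨(pf : ℕ) + 1, hq⟩ with hqf
        have hqval : (qf : ℕ) = (pf : ℕ) + 1 := rfl
        have hblock : ∀ j : Fin d.len,
            (n - (d.I j).card ≤ (pf : ℕ) ↔ n - (d.I j).card ≤ m) := by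
          intro j
          have h1 := hbp j pf
          rw [hπpf] at h1
          have hm' : ((⟨m, hmn⟩ : Fin n) : ℕ) = m := rfl
          rw [hm'] at h1
          exact h1.symm
        have hswbp : bp d (Equiv.swap pf qf) := by
          intro j x
          have hb := hblock j
          rcases eq_or_ne x pf with rfl | h1
          · rw [Equiv.swap_apply_left, hqval]
            omega
          · rcases eq_or_ne x qf with rfl | h2
            · rw [Equiv.swap_apply_right, hqval]
              omega
            · rw [Equiv.swap_apply_of_ne_of_ne h1 h2]
        have hbp' : bp d (π * Equiv.swap pf qf) := bp_mul hbp hswbp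
        have hfix' : ∀ x : Fin n, m + 1 ≤ (x : ℕ) → (π * Equiv.swap pf qf) x = x := by
          intro x hx
          have h1 : x ≠ pf := Fin.ne_of_val_ne (by omega)
          have h2 : x ≠ qf := Fin.ne_of_val_ne (by omega)
          rw [Equiv.Perm.mul_apply, Equiv.swap_apply_of_ne_of_ne h1 h2]
          exact hfix x hx
        have hsymm' : ((π * Equiv.swap pf qf).symm ⟨m, hmn⟩ : Fin n) = qf := by
          rw [Equiv.symm_apply_eq]
          show (⟨m, hmn⟩ : Fin n) = π (Equiv.swap pf qf qf)
          rw [Equiv.swap_apply_right, hπpf]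
        have hIH := iht (π * Equiv.swap pf qf) hbp' hfix'
          (by rw [hsymm', hqval]; omega)
        have hdecomp : mon π (fun _ => (1 : ℂ)) =
            mon (π * Equiv.swap pf qf) (fun _ => (1 : ℂ)) *
              mon (Equiv.swap pf qf) (fun _ => (1 : ℂ)) := by
          rw [mon_mul]
          have hps : (π * Equiv.swap pf qf) * Equiv.swap pf qf = π := by
            rw [mul_assoc, Equiv.swap_mul_self, mul_one]
          rw [hps]
          exact mon_congr _ fun b => (one_mul 1).symm
        have hgen : mon (Equiv.swap pf qf) (fun _ => (1 : ℂ)) ∈ HIgens ζ d := by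
          have hcond : ∀ j : Fin d.len, n - ((pf : ℕ) + 1) ≠ (d.I j).card := by
            intro j hEq
            have hcle := card_le_n d j
            have hb := hblock j
            omega
          have hsg := sgen_swap (ζ := ζ) (i := (pf : ℕ) + 1) (by omega) hq
          refine ⟨⟨(pf : ℕ) + 1, hq⟩, hcond, ?_⟩
          rw [show (((⟨(pf : ℕ) + 1, hq⟩ : Fin n)) : ℕ) = (pf : ℕ) + 1 from rfl, hsg]
          have hpf2 : (⟨(pf : ℕ) + 1 - 1, by omega⟩ : Fin n) = pf :=
            Fin.ext (show (pf : ℕ) + 1 - 1 = (pf : ℕ) by omega)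
          rw [hpf2]
        rw [hdecomp]
        exact mul_mem_genBy hIH (mem_genBy_of_mem hgen)
    · exact ih π hbp fun x hx => absurd x.isLt (by omega)

end Chain

end Stmt13Aux

namespace Stmt13Aux

variable {n : ℕ}

section Chain2

variable {r : ℕ} {ζ : ℂ}

/-- Diagonal matrices supported on the first block lie in the generated subgroup. -/
lemma diag_mem (hr : 2 ≤ r) (hn : 1 ≤ n) (hζ : IsPrimitiveRoot ζ r) (d : DecChain r n) :
    ∀ z : Fin n → ℂ, (∀ b, z b ^ r = 1) → (∀ x, cutLE d x → z x = 1) →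
      mon 1 z ∈ genBy (HIgens ζ d) := by
  haveI : NeZero r := ⟨by omega⟩
  by_cases hfull : ∃ j, (d.I j).card = n
  · intro z hzr hz1
    obtain ⟨j0, hj0⟩ := hfull
    have hall : ∀ b, z b = 1 := fun b => hz1 b ⟨j0, by omega⟩
    rw [mon_eq_one hall]
    exact one_mem_genBy
  · push_neg at hfull
    have hs0 : mon 1 (fun b : Fin n => if (b : ℕ) = 0 then ζ else 1) ∈ HIgens ζ d := by
      refine ⟨⟨0, by omega⟩, fun j => ?_, sgen_zero.symm⟩
      show n - 0 ≠ (d.I j).card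
      have h1 := hfull j
      have h2 := card_le_n d j
      omega
    suffices H : ∀ s : Finset (Fin n), ∀ z : Fin n → ℂ, (∀ b, z b ^ r = 1) →
        (∀ x, cutLE d x → z x = 1) → (∀ b ∉ s, z b = 1) →
        mon 1 z ∈ genBy (HIgens ζ d) by
      intro z h1 h2
      exact H Finset.univ z h1 h2 (by simp)
    intro s
    induction s using Finset.induction_on with
    | empty =>
      intro z h1 h2 h3
      rw [mon_eq_one fun b => h3 b (Finset.notMem_empty b)]
      exact one_mem_genBy
    | @insert a s ha ih =>
      intro z h1 h2 h3
      have hsplit : mon (1 : Equiv.Perm (Fin n)) z =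
          mon 1 (fun b => if b = a then z a else 1) * mon 1 (Function.update z a 1) := by
        rw [mon_mul, mul_one]
        apply mon_congr
        intro b
        rw [Equiv.Perm.one_apply]
        by_cases hb : b = a
        · rw [if_pos hb, Function.update_apply, if_pos hb, mul_one, hb]
        · rw [if_neg hb, Function.update_apply, if_neg hb, one_mul]
      rw [hsplit]
      refine mul_mem_genBy ?_ (ih (Function.update z a 1) ?_ ?_ ?_)
      rotate_left
      · intro b
        rw [Function.update_apply]
        split_ifs
        · exact one_pow r
        · exact h1 b
      · intro x hx
        rw [Function.update_apply]
        split_ifs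
        · rfl
        · exact h2 x hx
      · intro b hb
        rw [Function.update_apply]
        by_cases hba : b = a
        · rw [if_pos hba]
        · rw [if_neg hba]
          exact h3 b fun hmem => (Finset.mem_insert.mp hmem).elim hba hb
      by_cases hPa : cutLE d a
      · have hone : ∀ b : Fin n, (if b = a then z a else 1) = 1 := by
          intro b
          split_ifs with hb
          · exact h2 a hPa
          · rfl
        rw [mon_eq_one hone]
        exact one_mem_genBy
      · obtain ⟨k, hklt, hk⟩ := hζ.eq_pow_of_pow_eq_one (h1 a)
        set z0 : Fin n := ⟨0, by omega⟩ with hz0d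
        have hz0v : ((z0 : Fin n) : ℕ) = 0 := rfl
        have hcut_pos : ∀ j : Fin d.len, ¬ (n - (d.I j).card ≤ (a : ℕ)) :=
          fun j h => hPa ⟨j, h⟩
        have hswbp : bp d (Equiv.swap z0 a) := by
          intro j x
          have h1' := hcut_pos j
          have h2' := hfull j
          have h3' := card_le_n d j
          rcases eq_or_ne x z0 with rfl | hx1
          · rw [Equiv.swap_apply_left]
            omega
          · rcases eq_or_ne x a with rfl | hx2
            · rw [Equiv.swap_apply_right]
              omega
            · rw [Equiv.swap_apply_of_ne_of_ne hx1 hx2]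
        have hS : mon (Equiv.swap z0 a) (fun _ => (1 : ℂ)) ∈ genBy (HIgens ζ d) :=
          perm_mem ζ d n (Equiv.swap z0 a) hswbp fun x hx => absurd x.isLt (by omega)
        have hpowmem : ∀ k : ℕ,
            mon (1 : Equiv.Perm (Fin n)) (fun b => if (b : ℕ) = 0 then ζ ^ k else 1) ∈
              genBy (HIgens ζ d) := by
          intro k
          induction k with
          | zero =>
            have hone : ∀ b : Fin n, (if (b : ℕ) = 0 then ζ ^ 0 else 1) = 1 := by
              intro b; split_ifs
              · exact pow_zero ζ
              · rfl
            rw [mon_eq_one hone]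
            exact one_mem_genBy
          | succ k ihk =>
            have hstep : mon (1 : Equiv.Perm (Fin n))
                  (fun b => if (b : ℕ) = 0 then ζ ^ (k + 1) else 1) =
                mon 1 (fun b => if (b : ℕ) = 0 then ζ else 1) *
                  mon 1 (fun b => if (b : ℕ) = 0 then ζ ^ k else 1) := by
              rw [mon_mul, mul_one]
              apply mon_congr
              intro b
              rw [Equiv.Perm.one_apply]
              by_cases hb : (b : ℕ) = 0
              · rw [if_pos hb, if_pos hb, if_pos hb, pow_succ, mul_comm]
              · rw [if_neg hb, if_neg hb, if_neg hb, one_mul]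
            rw [hstep]
            exact mul_mem_genBy (mem_genBy_of_mem hs0) ihk
        have hconj : mon (Equiv.swap z0 a) (fun _ => (1 : ℂ)) *
              mon 1 (fun b => if (b : ℕ) = 0 then ζ ^ k else 1) *
              mon (Equiv.swap z0 a) (fun _ => (1 : ℂ)) =
            mon (1 : Equiv.Perm (Fin n)) (fun b => if b = a then z a else 1) := by
          rw [mon_mul, mon_mul]
          have hps : (Equiv.swap z0 a * 1) * Equiv.swap z0 a = 1 := by
            rw [mul_one, Equiv.swap_mul_self]
          rw [hps]
          apply mon_congr
          intro b
          simp only [Equiv.Perm.one_apply, one_mul, mul_one]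
          by_cases hb : b = a
          · rw [hb, Equiv.swap_apply_right, if_pos hz0v, if_pos rfl, hk]
          · rw [if_neg hb]
            have hne0 : ((Equiv.swap z0 a b : Fin n) : ℕ) ≠ 0 := by
              intro h0
              have hbz : Equiv.swap z0 a b = z0 := Fin.ext h0
              have h2' := congrArg (Equiv.swap z0 a) hbz
              rw [Equiv.swap_apply_self, Equiv.swap_apply_left] at h2'
              exact hb h2'
            rw [if_neg hne0]
        rw [← hconj]
        exact mul_mem_genBy (mul_mem_genBy hS (hpowmem k)) hS

/-- Every `Good` matrix lies in the generated subgroup. -/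
lemma good_mem (hr : 2 ≤ r) (hn : 1 ≤ n) (hζ : IsPrimitiveRoot ζ r) (d : DecChain r n)
    {M : Matrix (Fin n) (Fin n) ℂ} (hg : Good r d M) : M ∈ genBy (HIgens ζ d) := by
  obtain ⟨π, z, rfl, hz0, hzr, hbpπ, hz1⟩ := hg
  have hdecomp : mon π z = mon 1 (fun cc => z (π.symm cc)) * mon π (fun _ => (1 : ℂ)) := by
    rw [mon_mul, one_mul]
    exact mon_congr _ fun b => by rw [Equiv.symm_apply_apply, mul_one]
  rw [hdecomp]
  refine mul_mem_genBy (diag_mem hr hn hζ d _ (fun b => hzr _) ?_)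
    (perm_mem ζ d n π hbpπ fun x hx => absurd x.isLt (by omega))
  intro x hx
  apply hz1
  obtain ⟨j, hj⟩ := hx
  refine ⟨j, ?_⟩
  have h1 := hbpπ j (π.symm x)
  rw [Equiv.apply_symm_apply] at h1
  exact h1.mp hj

end Chain2

end Stmt13Aux

open Stmt13Aux

/-- Proposition 6.6(ii): `C_I ⊆ C_J` iff `I` refines `J` (the cosets
being written as `H_I·A` and `H_J·B` for representatives `A`, `B` satisfying
conditions (i) and (ii)). -/
theorem stmt13 (r n : ℕ) (hr : 2 ≤ r) (hn : 1 ≤ n) (ζ : ℂ) (hζ : IsPrimitiveRoot ζ r)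
    (c d : DecChain r n) (A B : Matrix (Fin n) (Fin n) ℂ)
    (hA : A ∈ Srn r n) (hrA : repCond ζ c A)
    (hB : B ∈ Srn r n) (hrB : repCond ζ d B) :
    {M | ∃ h ∈ genBy (HIgens ζ c), M = h * A} ⊆
        {M | ∃ h ∈ genBy (HIgens ζ d), M = h * B} ↔
      Refines c d := by
  classical
  haveI : NeZero r := ⟨by omega⟩
  obtain ⟨α, zA, hzA0, hzAr, rfl⟩ := srn_extract hA
  obtain ⟨β, zB, hzB0, hzBr, rfl⟩ := srn_extract hB
  constructor
  · intro hsub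
    have h0 : mon α zA ∈ {M | ∃ h ∈ genBy (HIgens ζ d), M = h * mon β zB} := by
      apply hsub
      exact ⟨1, one_mem_genBy, (one_mul _).symm⟩
    obtain ⟨h₀, hh₀, hEq0⟩ := h0
    obtain ⟨π₀, w₀, rfl, hw₀0, hw₀r, hbp₀, hw₀1⟩ := genBy_good hr hζ hh₀
    rw [mon_mul] at hEq0
    refine ⟨?_, ?_⟩
    · -- every set of d appears among the sets of c
      intro j'
      have hJB : ∀ b : Fin n, b ∈ d.I j' ↔ n - (d.I j').card ≤ ((β b : Fin n) : ℕ) :=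
        fun b => rep1 hrB hzB0 j' b
      have hstar : ∀ b : Fin n, b ∈ d.I j' ↔ n - (d.I j').card ≤ ((α b : Fin n) : ℕ) := by
        intro b
        rw [hJB b]
        have h1 : (π₀ * β) b = α b := (mon_inj hEq0 hzA0 b).1
        rw [Equiv.Perm.mul_apply] at h1
        have h2 := hbp₀ j' (β b)
        rw [h1] at h2
        exact h2.symm
      by_cases hcard : ∃ j : Fin c.len, (c.I j).card = (d.I j').card
      · obtain ⟨j, hj⟩ := hcard
        refine ⟨j, ?_⟩
        ext b
        rw [rep1 hrA hzA0 j b, hj]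
        exact (hstar b).symm
      · push_neg at hcard
        exfalso
        have hm1 : 1 ≤ (d.I j').card := Finset.card_pos.mpr (d.nonempty j')
        have hmn : (d.I j').card ≤ n := card_le_n d j'
        by_cases hmltn : (d.I j').card < n
        · -- swap generator crossing the missing cut
          set pf : Fin n := ⟨n - (d.I j').card - 1, by omega⟩ with hpfd
          set qf : Fin n := ⟨n - (d.I j').card, by omega⟩ with hqfd
          have hpfv : (pf : ℕ) = n - (d.I j').card - 1 := rfl
          have hqfv : (qf : ℕ) = n - (d.I j').card := rfl
          have hsw : sgen ζ (n - (d.I j').card) =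
              mon (Equiv.swap pf qf) (fun _ => (1 : ℂ)) := by
            have := sgen_swap (n := n) (ζ := ζ) (i := n - (d.I j').card) (by omega) (by omega)
            rw [this]
          have hmem : sgen ζ (n - (d.I j').card) ∈ HIgens ζ c := by
            refine ⟨⟨n - (d.I j').card, by omega⟩, fun j => ?_, rfl⟩
            show n - (n - (d.I j').card) ≠ (c.I j).card
            have := hcard j
            have := card_le_n c j
            omega
          have hx : (sgen ζ (n - (d.I j').card) * mon α zA) ∈
              {M | ∃ h ∈ genBy (HIgens ζ c), M = h * mon α zA} :=
            ⟨_, mem_genBy_of_mem hmem, rfl⟩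
          obtain ⟨h', hh', hEq'⟩ := hsub hx
          obtain ⟨π', w', rfl, hw'0, hw'r, hbpp, hw'1⟩ := genBy_good hr hζ hh'
          rw [hsw, mon_mul, mon_mul] at hEq'
          have hnz : ∀ b : Fin n, (fun _ : Fin n => (1 : ℂ)) (α b) * zA b ≠ 0 :=
            fun b => by simpa using hzA0 b
          set b₁ : Fin n := α.symm pf with hb₁d
          have hαb₁ : α b₁ = pf := Equiv.apply_symm_apply α pf
          have h1 : (π' * β) b₁ = (Equiv.swap pf qf * α) b₁ := (mon_inj hEq' hnz b₁).1
          rw [Equiv.Perm.mul_apply, Equiv.Perm.mul_apply, hαb₁, Equiv.swap_apply_left] at h1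
          have h2 := hbpp j' (β b₁)
          rw [h1] at h2
          have hb₁J : b₁ ∈ d.I j' := (hJB b₁).mpr (h2.mp hqfv.ge)
          have hcontr := (hstar b₁).mp hb₁J
          rw [hαb₁] at hcontr
          omega
        · -- the missing cardinality is n
          have hmeqn : (d.I j').card = n := by omega
          have hmem : sgen ζ 0 ∈ HIgens ζ c := by
            refine ⟨⟨0, by omega⟩, fun j => ?_, rfl⟩
            show n - 0 ≠ (c.I j).card
            have := hcard j
            have := card_le_n c j
            omega
          have hx : (sgen ζ 0 * mon α zA) ∈
              {M | ∃ h ∈ genBy (HIgens ζ c), M = h * mon α zA} :=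
            ⟨_, mem_genBy_of_mem hmem, rfl⟩
          obtain ⟨h', hh', hEq'⟩ := hsub hx
          obtain ⟨π', w', rfl, hw'0, hw'r, hbpp, hw'1⟩ := genBy_good hr hζ hh'
          rw [sgen_zero, mon_mul, mon_mul] at hEq'
          have hζne : ζ ≠ 0 := hζ.ne_zero (by omega)
          have hnz : ∀ b : Fin n,
              (fun b : Fin n => if (b : ℕ) = 0 then ζ else 1) (α b) * zA b ≠ 0 := by
            intro b
            show (if ((α b : Fin n) : ℕ) = 0 then ζ else 1) * zA b ≠ 0
            apply mul_ne_zero _ (hzA0 b)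
            split_ifs
            · exact hζne
            · exact one_ne_zero
          have hP : ∀ x : Fin n, cutLE d x := fun x => ⟨j', by omega⟩
          set z0 : Fin n := ⟨0, by omega⟩ with hz0d
          have hz0v : ((z0 : Fin n) : ℕ) = 0 := rfl
          set b₀ : Fin n := α.symm z0 with hb₀d
          have hα0 : α b₀ = z0 := Equiv.apply_symm_apply α z0
          have hv1 : w₀ (β b₀) * zB b₀ = zA b₀ := (mon_inj hEq0 hzA0 b₀).2
          rw [hw₀1 (β b₀) (hP _), one_mul] at hv1
          have hk2 : w' (β b₀) * zB b₀ =
              (if ((α b₀ : Fin n) : ℕ) = 0 then ζ else 1) * zA b₀ := (mon_inj hEq' hnz b₀).2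
          rw [hw'1 (β b₀) (hP _), one_mul, hα0, if_pos hz0v, hv1] at hk2
          have hζ1 : (1 : ℂ) = ζ :=
            mul_right_cancel₀ (hzA0 b₀) (by rw [one_mul]; exact hk2)
          exact hζ.ne_one (by omega) hζ1.symm
    · -- decorations agree
      intro i hd' hc'
      obtain ⟨j', hj'mem, hij'⟩ := Finset.mem_sup.mp hd'
      have hPd : cutLE d (β i) := ⟨j', (rep1 hrB hzB0 j' i).mp hij'⟩
      have hv : w₀ (β i) * zB i = zA i := (mon_inj hEq0 hzA0 i).2
      rw [hw₀1 (β i) hPd, one_mul] at hv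
      have h1 : zA i = ζ ^ (-(((c.dec i hc').val : ℤ))) := rep2 hrA hzA0 i hc'
      have h2 : zB i = ζ ^ (-(((d.dec i hd').val : ℤ))) := rep2 hrB hzB0 i hd'
      have h3 : ζ ^ (-(((d.dec i hd').val : ℤ))) = ζ ^ (-(((c.dec i hc').val : ℤ))) := by
        rw [← h2, hv, h1]
      rw [zpow_neg, zpow_neg, zpow_natCast, zpow_natCast, inv_inj] at h3
      have hval : (d.dec i hd').val = (c.dec i hc').val :=
        hζ.pow_inj (ZMod.val_lt _) (ZMod.val_lt _) h3
      exact ZMod.val_injective r hval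
  · rintro ⟨hsets, hdec⟩
    intro M hM
    obtain ⟨h, hh, rfl⟩ := hM
    have hsub : HIgens ζ c ⊆ HIgens ζ d := by
      rintro x ⟨i, hcond, rfl⟩
      refine ⟨i, fun j' => ?_, rfl⟩
      obtain ⟨j, hj⟩ := hsets j'
      rw [← hj]
      exact hcond j
    set y : Fin n → ℂ := fun x => zA (β.symm x) * (zB (β.symm x))⁻¹ with hy
    have hNB : mon (α * β⁻¹) y * mon β zB = mon α zA := by
      rw [mon_mul]
      have hperm : (α * β⁻¹) * β = α := by group
      rw [hperm]
      apply mon_congr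
      intro b
      show zA (β.symm (β b)) * (zB (β.symm (β b)))⁻¹ * zB b = zA b
      rw [Equiv.symm_apply_apply]
      exact inv_mul_cancel_right₀ (hzB0 b) (zA b)
    have hgoodN : Good r d (mon (α * β⁻¹) y) := by
      refine ⟨α * β⁻¹, y, rfl, ?_, ?_, ?_, ?_⟩
      · intro b
        exact mul_ne_zero (hzA0 _) (inv_ne_zero (hzB0 _))
      · intro b
        show (zA (β.symm b) * (zB (β.symm b))⁻¹) ^ r = 1
        rw [mul_pow, hzAr, one_mul, inv_pow, hzBr, inv_one]
      · intro j' x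
        rw [Equiv.Perm.mul_apply]
        obtain ⟨j, hj⟩ := hsets j'
        have hbx : β (β⁻¹ x) = x := Equiv.apply_symm_apply β x
        have hBiff : β⁻¹ x ∈ d.I j' ↔ n - (d.I j').card ≤ (x : ℕ) := by
          rw [rep1 hrB hzB0 j' (β⁻¹ x), hbx]
        have hAiff : β⁻¹ x ∈ d.I j' ↔ n - (d.I j').card ≤ ((α (β⁻¹ x) : Fin n) : ℕ) := by
          rw [← hj, rep1 hrA hzA0 j (β⁻¹ x), hj]
        exact hAiff.symm.trans hBiff
      · intro x hx
        obtain ⟨j', hj'x⟩ := hx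
        have hbx : β (β.symm x) = x := Equiv.apply_symm_apply β x
        have hbJ : β.symm x ∈ d.I j' := by
          rw [rep1 hrB hzB0 j' (β.symm x), hbx]
          exact hj'x
        obtain ⟨j, hj⟩ := hsets j'
        have hbtop_d : (β.symm x) ∈ d.top := DecChain.mem_top d j' hbJ
        have hbtop_c : (β.symm x) ∈ c.top := DecChain.mem_top c j (by rw [hj]; exact hbJ)
        have h1 : zA (β.symm x) = ζ ^ (-(((c.dec _ hbtop_c).val : ℤ))) :=
          rep2 hrA hzA0 _ hbtop_c
        have h2 : zB (β.symm x) = ζ ^ (-(((d.dec _ hbtop_d).val : ℤ))) :=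
          rep2 hrB hzB0 _ hbtop_d
        have hdd := hdec (β.symm x) hbtop_d hbtop_c
        show zA (β.symm x) * (zB (β.symm x))⁻¹ = 1
        rw [h1, h2, hdd]
        exact mul_inv_cancel₀ (zpow_ne_zero _ (hζ.ne_zero (by omega)))
    have hNmem := good_mem hr hn hζ d hgoodN
    refine ⟨h * mon (α * β⁻¹) y, mul_mem_genBy (genBy_mono hsub hh) hNmem, ?_⟩
    rw [mul_assoc, hNB]
end
end
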